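/- arXiv:0908.2319 — 4 statements merged into one kernel-verified Lean document; each statement's English description precedes it below -/
import Mathlib

section
/- If p is an odd Ramanujan prime and p = p_n is the n-th prime, then every integer k with (p+1)/2 ≤ k ≤ (p_{n+1}-1)/2 is composite (i.e., p satisfies Condition 1). -/
/-!
If `p = R_m` is prime, minimality of `R_m` makes `x = p - 1` fail the defining inequality, so
`π(p - 1) - π((p - 1)/2) < m`, while `x = 2k ≥ p` satisfies it: `m ≤ π(2k) - π(k)`. A prime `k`
with `2k ≥ p` adds one to `π(k)` over `π((p - 1)/2)`, and `p` adds one to `π(p)` over `π(p - 1)`;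
together this forces `π(p) < π(2k)`, i.e. a prime in `(p, 2k]`. For `p = p_n` and
`2k < p_{n+1}` there is no such prime.
-/

/-- `nthPrime n` is the n-th prime with 1-based indexing: p_1 = 2, p_2 = 3, ... -/
noncomputable def nthPrime (n : ℕ) : ℕ := Nat.nth Nat.Prime (n - 1)

/-- The n-th Ramanujan prime: the smallest positive integer R such that for all
integers x ≥ R one has π(x) − π(⌊x/2⌋) ≥ n. -/
noncomputable def ramanujan (n : ℕ) : ℕ :=
  sInf {R : ℕ | 0 < R ∧ ∀ x : ℕ, R ≤ x →
    n ≤ Nat.primeCounting x - Nat.primeCounting (x / 2)}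

/-- A Ramanujan prime is a number of the form R_n for some n ≥ 1. -/
def IsRamanujanPrime (p : ℕ) : Prop := ∃ n : ℕ, 1 ≤ n ∧ p = ramanujan n

open Nat
open scoped Nat.Prime

theorem Nat.Prime.primeCounting_sub_one_add_one {p : ℕ} (hp : p.Prime) :
    π (p - 1) + 1 = π p := by
  rw [primeCounting_sub_one, primeCounting_eq_primeCounting'_succ, primeCounting',
    count_succ, if_pos hp]

theorem prime_nthPrime (n : ℕ) : (nthPrime n).Prime :=
  prime_nth_prime _

theorem primeCounting_nthPrime_sub_one (n : ℕ) : π (nthPrime n - 1) = n - 1 :=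
  (primeCounting_sub_one _).trans (primeCounting'_nth_eq _)

theorem primeCounting_nthPrime {n : ℕ} (hn : 1 ≤ n) : π (nthPrime n) = n := by
  rw [← (prime_nthPrime n).primeCounting_sub_one_add_one, primeCounting_nthPrime_sub_one]
  omega

theorem le_primeCounting_sub_of_ramanujan_le {m x : ℕ} (hR : ramanujan m ≠ 0)
    (hx : ramanujan m ≤ x) : m ≤ π x - π (x / 2) :=
  (sInf_mem (nonempty_of_pos_sInf (Nat.pos_of_ne_zero hR))).2 x hx

theorem primeCounting_sub_lt_of_ramanujan {m : ℕ} (hR : 2 ≤ ramanujan m) :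
    π (ramanujan m - 1) - π ((ramanujan m - 1) / 2) < m := by
  by_contra! h
  have : ramanujan m ≤ ramanujan m - 1 := by
    apply Nat.sInf_le
    refine ⟨by omega, fun x hx => ?_⟩
    rcases hx.eq_or_lt with rfl | _
    · exact h
    · exact le_primeCounting_sub_of_ramanujan_le (by omega) (by omega)
  omega

theorem primeCounting_lt_primeCounting_two_mul_of_ramanujan {m k : ℕ}
    (hR : (ramanujan m).Prime) (hk : k.Prime) (hRk : ramanujan m ≤ 2 * k) :
    π (ramanujan m) < π (2 * k) := by
  have hfar := le_primeCounting_sub_of_ramanujan_le hR.ne_zero hRk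
  rw [Nat.mul_div_cancel_left k two_pos] at hfar
  have hnear := primeCounting_sub_lt_of_ramanujan hR.two_le
  have hhalf : π ((ramanujan m - 1) / 2) ≤ π (k - 1) := monotone_primeCounting (by omega)
  have hhalf_le : π ((ramanujan m - 1) / 2) ≤ π (ramanujan m - 1) :=
    monotone_primeCounting (Nat.div_le_self _ _)
  have hR_step := hR.primeCounting_sub_one_add_one
  have hk_step := hk.primeCounting_sub_one_add_one
  omega

theorem ramanujan_satisfies_condition1_general (p n : ℕ) (hn : 1 ≤ n)
    (hp : p = nthPrime n) (hram : IsRamanujanPrime p) :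
    ∀ k : ℕ, (p + 1) / 2 ≤ k → k ≤ (nthPrime (n + 1) - 1) / 2 → ¬ k.Prime := by
  intro k hk_lo hk_hi hk
  obtain ⟨m, -, hpm⟩ := hram
  subst hpm
  have hlt := primeCounting_lt_primeCounting_two_mul_of_ramanujan
    (hp ▸ prime_nthPrime n) hk (by omega)
  have hle : π (2 * k) ≤ π (nthPrime (n + 1) - 1) := monotone_primeCounting (by omega)
  rw [primeCounting_nthPrime_sub_one] at hle
  rw [hp, primeCounting_nthPrime hn] at hlt
  omega

/-- If p is an odd Ramanujan prime and p = p_n is the n-th prime, then every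
integer k with (p+1)/2 ≤ k ≤ (p_{n+1}-1)/2 is composite (Condition 1). -/
theorem ramanujan_satisfies_condition1 (p n : ℕ) (hn : 1 ≤ n)
    (hp : p = nthPrime n) (hodd : Odd p) (hram : IsRamanujanPrime p) :
    ∀ k : ℕ, (p + 1) / 2 ≤ k → k ≤ (nthPrime (n + 1) - 1) / 2 → ¬ k.Prime :=
  ramanujan_satisfies_condition1_general p n hn hp hram
end

section
/- For every n ≥ 1, the prime p^{(n)} produced by the following sieve equals the n-th RPR-prime (the n-th smallest element of the set consisting of 2 together with all odd primes satisfying Condition 1). The sieve: B_1 = {b^{(1)}(m)} is the Bertrand sequence defined by b^{(1)}(1) = 2 and, for m ≥ 2, b^{(1)}(m) is the largest prime less than 2·b^{(1)}(m−1); inductively, given B_1, ..., B_{k−1}, let p^{(k)} be the smallest prime not belonging to B_1 ∪ ... ∪ B_{k−1}, and let B_k = {b^{(k)}(m)} be defined by b^{(k)}(1) = p^{(k)} and, for m ≥ 2, b^{(k)}(m) the largest prime less than 2·b^{(k)}(m−1); finally set p^{(1)} = 2. -/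
/-- An RPR-prime: either 2, or an odd prime p = p_n satisfying Condition 1, i.e.
every integer k with (p+1)/2 ≤ k ≤ (p_{n+1}-1)/2 is composite. -/
def IsRPR (p : ℕ) : Prop :=
  p = 2 ∨ (p.Prime ∧ Odd p ∧ ∀ n : ℕ, p = nthPrime n →
    ∀ k : ℕ, (p + 1) / 2 ≤ k → k ≤ (nthPrime (n + 1) - 1) / 2 → ¬ k.Prime)

/-- The largest prime strictly below N. -/
noncomputable def largestPrimeBelow (N : ℕ) : ℕ := sSup {q : ℕ | q.Prime ∧ q < N}

/-- The Bertrand-type sequence starting at s: b(0) = s and b(m+1) is the largest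
prime less than 2·b(m).  (This is the paper's b^{(k)} with b^{(k)}(1) = s.) -/
noncomputable def bertSeq (s : ℕ) : ℕ → ℕ
  | 0 => s
  | m + 1 => largestPrimeBelow (2 * bertSeq s m)

/-- The sieve sequence (0-indexed): `sieveP 0 = 2` is the paper's p^{(1)}, and
`sieveP j` for j ≥ 1 is the paper's p^{(j+1)}, namely the smallest prime not
belonging to any of the Bertrand sequences B_1, ..., B_j started at the previous
values p^{(1)}, ..., p^{(j)}. -/
noncomputable def sieveP (n : ℕ) : ℕ :=
  Nat.strongRecOn n fun j ih =>
    match j, ih with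
    | 0, _ => 2
    | j + 1, ih =>
      sInf {q : ℕ | q.Prime ∧ ∀ i : ℕ, ∀ h : i < j + 1, ∀ m : ℕ, q ≠ bertSeq (ih i h) m}

/-!
A prime `p` occurs in a Bertrand sequence other than as its first term exactly when `p` is the
largest prime below `2q` for some prime `q`, i.e. when `p < 2q ≤ p'` with `p'` the prime after
`p`; this is the negation of Condition 1. So the RPR-primes are the primes that can only start a
Bertrand sequence, and walking backwards from any prime `q` through such predecessors ends at an
RPR-prime `r ≤ q` whose Bertrand sequence contains `q`. Hence, once the first `n` RPR-primes
have been used as starting points, the primes not yet sieved out are those whose root is a later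
RPR-prime, and the least of them is the `(n+1)`-st RPR-prime.
-/

open Nat

lemma Nat.nth_eq_sInf_le_count (p : ℕ → Prop) [DecidablePred p] (n : ℕ) :
    nth p n = sInf {x | p x ∧ n ≤ count p x} := by
  rw [nth_eq_sInf]
  congr 1
  ext x
  refine and_congr_right fun hx => ⟨fun h => ?_, fun h k hk => nth_lt_of_lt_count (hk.trans_le h)⟩
  by_contra! hlt
  exact (h _ hlt).ne (nth_count hx)

noncomputable def nextPrime (p : ℕ) : ℕ := nth Nat.Prime (count Nat.Prime p + 1)

lemma nextPrime_prime (p : ℕ) : (nextPrime p).Prime :=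
  nth_mem_of_infinite infinite_setOfPred_prime _

lemma lt_nextPrime {p : ℕ} (hp : p.Prime) : p < nextPrime p := by
  conv_lhs => rw [← nth_count hp]
  exact nth_strictMono infinite_setOfPred_prime (lt_add_one _)

lemma nextPrime_le {p r : ℕ} (hp : p.Prime) (hr : r.Prime) (h : p < r) : nextPrime p ≤ r := by
  by_contra! hlt
  exact h.not_ge (nth_count hp ▸ le_nth_of_lt_nth_succ hlt hr)

lemma nthPrime_eq_iff {p n : ℕ} (hp : p.Prime) (hp2 : p ≠ 2) :
    nthPrime n = p ↔ n = count Nat.Prime p + 1 := by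
  -- `nthPrime 0 = nthPrime 1 = 2` because of the truncated subtraction in `n - 1`
  rcases n with _ | n
  · rw [nthPrime, zero_tsub, nth_prime_zero_eq_two]
    exact iff_of_false (Ne.symm hp2) (by omega)
  · rw [nthPrime, add_tsub_cancel_right,
      (nth_injective infinite_setOfPred_prime).eq_iff' (nth_count hp)]
    exact (add_left_inj 1).symm

lemma nthPrime_count_add_two (p : ℕ) : nthPrime (count Nat.Prime p + 1 + 1) = nextPrime p := rfl

lemma largestPrimeBelow_spec {N : ℕ} (h : ∃ r, r.Prime ∧ r < N) :
    (largestPrimeBelow N).Prime ∧ largestPrimeBelow N < N :=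
  Nat.sSup_mem h ⟨N, fun _ hr => hr.2.le⟩

lemma le_largestPrimeBelow {r N : ℕ} (hr : r.Prime) (h : r < N) : r ≤ largestPrimeBelow N :=
  le_csSup ⟨N, fun _ hr => hr.2.le⟩ ⟨hr, h⟩

lemma largestPrimeBelow_eq_iff {p N : ℕ} (hp : p.Prime) :
    largestPrimeBelow N = p ↔ p < N ∧ N ≤ nextPrime p := by
  constructor
  · rintro rfl
    have hN : ∃ r, r.Prime ∧ r < N := by
      by_contra! h
      have hempty : {q | q.Prime ∧ q < N} = ∅ :=
        Set.eq_empty_of_forall_notMem fun r hr => (h r hr.1).not_gt hr.2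
      simp [largestPrimeBelow, hempty, not_prime_zero] at hp
    refine ⟨(largestPrimeBelow_spec hN).2, ?_⟩
    by_contra! h
    exact (le_largestPrimeBelow (nextPrime_prime _) h).not_gt (lt_nextPrime hp)
  · rintro ⟨hpN, hNp⟩
    obtain ⟨hq, hqN⟩ := largestPrimeBelow_spec ⟨p, hp, hpN⟩
    refine (le_largestPrimeBelow hp hpN).antisymm' ?_
    by_contra! h
    exact (nextPrime_le hp hq h).not_gt (hqN.trans_le hNp)

lemma exists_prime_lt_lt_two_mul {q : ℕ} (hq : q.Prime) : ∃ r, r.Prime ∧ q < r ∧ r < 2 * q := by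
  obtain ⟨r, hr, hqr, hr2q⟩ := exists_prime_lt_and_le_two_mul q hq.ne_zero
  refine ⟨r, hr, hqr, hr2q.lt_of_ne ?_⟩
  rintro rfl
  exact not_prime_mul (by norm_num) hq.one_lt.ne' hr

lemma largestPrimeBelow_two_mul_prime {q : ℕ} (hq : q.Prime) :
    (largestPrimeBelow (2 * q)).Prime := by
  obtain ⟨r, hr, -, hr2q⟩ := exists_prime_lt_lt_two_mul hq
  exact (largestPrimeBelow_spec ⟨r, hr, hr2q⟩).1

lemma lt_largestPrimeBelow_two_mul {q : ℕ} (hq : q.Prime) : q < largestPrimeBelow (2 * q) := by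
  obtain ⟨r, hr, hqr, hr2q⟩ := exists_prime_lt_lt_two_mul hq
  exact hqr.trans_le (le_largestPrimeBelow hr hr2q)

lemma condition1_iff {p : ℕ} (hp : p.Prime) (hp2 : p ≠ 2) :
    (∀ n, p = nthPrime n →
      ∀ k, (p + 1) / 2 ≤ k → k ≤ (nthPrime (n + 1) - 1) / 2 → ¬ k.Prime) ↔
    ∀ k, k.Prime → ¬ (p < 2 * k ∧ 2 * k ≤ nextPrime p) := by
  simp only [eq_comm (a := p), nthPrime_eq_iff hp hp2, forall_eq, nthPrime_count_add_two]
  have hP2 : nextPrime p ≠ 2 := (hp.two_le.trans_lt (lt_nextPrime hp)).ne'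
  -- `p` and `nextPrime p` are odd, so the bounds on `k` say `p < 2 * k < nextPrime p`
  obtain ⟨a, rfl⟩ := hp.odd_of_ne_two hp2
  obtain ⟨b, hb⟩ := (nextPrime_prime _).odd_of_ne_two hP2
  exact forall_congr' fun k =>
    ⟨fun h hk _ => h (by omega) (by omega) hk, fun h _ _ hk => h hk (by omega)⟩

theorem isRPR_iff {p : ℕ} : IsRPR p ↔ p.Prime ∧ ∀ q, q.Prime → largestPrimeBelow (2 * q) ≠ p := by
  rcases eq_or_ne p 2 with rfl | hp2
  · refine iff_of_true (Or.inl rfl) ⟨prime_two, fun q hq => ?_⟩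
    exact (hq.two_le.trans_lt (lt_largestPrimeBelow_two_mul hq)).ne'
  · simp only [IsRPR, hp2, false_or]
    refine and_congr_right fun hp => ?_
    rw [and_iff_right (hp.odd_of_ne_two hp2), condition1_iff hp hp2]
    exact forall₂_congr fun q _ => by rw [Ne, largestPrimeBelow_eq_iff hp]

lemma IsRPR.prime {p : ℕ} (h : IsRPR p) : p.Prime := (isRPR_iff.1 h).1

lemma bertSeq_prime {s : ℕ} (hs : s.Prime) : ∀ m, (bertSeq s m).Prime
  | 0 => hs
  | m + 1 => largestPrimeBelow_two_mul_prime (bertSeq_prime hs m)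

lemma IsRPR.eq_of_bertSeq_eq {p s m : ℕ} (hp : IsRPR p) (hs : s.Prime) (h : bertSeq s m = p) :
    s = p := by
  cases m with
  | zero => exact h
  | succ m => exact absurd h ((isRPR_iff.1 hp).2 _ (bertSeq_prime hs m))

lemma exists_isRPR_le_bertSeq_eq {q : ℕ} (hq : q.Prime) :
    ∃ r, IsRPR r ∧ r ≤ q ∧ ∃ m, bertSeq r m = q := by
  induction q using Nat.strong_induction_on with
  | _ q ih =>
    by_cases hR : IsRPR q
    · exact ⟨q, hR, le_rfl, 0, rfl⟩
    obtain ⟨q', hq', hq'q⟩ : ∃ q', q'.Prime ∧ largestPrimeBelow (2 * q') = q := by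
      simpa [isRPR_iff, hq] using hR
    have hlt : q' < q := hq'q ▸ lt_largestPrimeBelow_two_mul hq'
    obtain ⟨r, hr, hrq', m, hm⟩ := ih q' hlt hq'
    exact ⟨r, hr, hrq'.trans hlt.le, m + 1, by rw [bertSeq, hm, hq'q]⟩

def unsieved (s : ℕ → ℕ) (n : ℕ) : Set ℕ := {q | q.Prime ∧ ∀ i < n, ∀ m, q ≠ bertSeq (s i) m}

lemma unsieved_congr {s t : ℕ → ℕ} {n : ℕ} (h : ∀ i < n, s i = t i) :
    unsieved s n = unsieved t n := by
  ext q
  exact and_congr_right fun _ => forall₂_congr fun i hi => by rw [h i hi]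

lemma sInf_unsieved_nth_isRPR (n : ℕ) : sInf (unsieved (nth IsRPR) n) = nth IsRPR n := by
  classical
  rw [nth_eq_sInf_le_count]
  apply csInf_eq_csInf_of_forall_exists_le
  · rintro q ⟨hq, hfree⟩
    obtain ⟨r, hr, hrq, m, hm⟩ := exists_isRPR_le_bertSeq_eq hq
    refine ⟨r, ⟨hr, ?_⟩, hrq⟩
    by_contra! hlt
    exact hfree _ hlt m (by rw [nth_count hr, hm])
  · rintro r ⟨hr, hn⟩
    refine ⟨r, ⟨hr.prime, fun i hi m hm => ?_⟩, le_rfl⟩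
    have hiR : IsRPR (nth IsRPR i) := nth_mem_anti (hi.le.trans hn) ((nth_count hr).symm ▸ hr)
    exact (nth_lt_of_lt_count (hi.trans_le hn)).ne (hr.eq_of_bertSeq_eq hiR.prime hm.symm)

lemma sieveP_eq_sInf_unsieved (n : ℕ) : sieveP n = sInf (unsieved sieveP n) := by
  rw [sieveP, Nat.strongRecOn_eq]
  cases n with
  | zero =>
    have h2 : 2 ∈ unsieved sieveP 0 := ⟨prime_two, by simp⟩
    exact le_antisymm (Nat.sInf_mem ⟨2, h2⟩).1.two_le (Nat.sInf_le h2)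
  | succ n => rfl

theorem sieveP_eq_nth_isRPR (n : ℕ) : sieveP n = nth IsRPR n := by
  induction n using Nat.strong_induction_on with
  | _ n ih => rw [sieveP_eq_sInf_unsieved, unsieved_congr ih, sInf_unsieved_nth_isRPR]

theorem sieve_eq_nth_RPR_general (n : ℕ) :
    sieveP (n - 1) = Nat.nth IsRPR (n - 1) :=
  sieveP_eq_nth_isRPR (n - 1)

/-- For every n ≥ 1, the n-th prime produced by the sieve equals the n-th
RPR-prime (0-indexed via `Nat.nth`: the (n-1)-st smallest element of the set of
RPR-primes). -/
theorem sieve_eq_nth_RPR (n : ℕ) (hn : 1 ≤ n) :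
    sieveP (n - 1) = Nat.nth IsRPR (n - 1) :=
  sieve_eq_nth_RPR_general n
end

section
/- For every n ≥ 1, π(R_n) − π(⌊R_n/2⌋) = n, where R_n is the n-th Ramanujan prime and π is the prime counting function. -/
namespace Ramanujan

open Real in
theorem real_main_inequality {x : ℝ} (x_large : (8192 : ℝ) ≤ x) :
    x * (2 * x) ^ (2 * √(2 * x)) * 4 ^ (2 * x / 3) ≤ 4 ^ x := by
  let f : ℝ → ℝ := fun x => log x + 2 * (√(2 * x) * log (2 * x)) - log 4 / 3 * x
  have hpos : ∀ x, 0 < x → 0 < x * (2 * x) ^ (2 * √(2 * x)) / 4 ^ (x / 3) := fun x h =>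
    div_pos (mul_pos h (rpow_pos_of_pos (mul_pos two_pos h) _)) (rpow_pos_of_pos four_pos _)
  have hf : ∀ x, 0 < x → f x = log (x * (2 * x) ^ (2 * √(2 * x)) / 4 ^ (x / 3)) := by
    intro x hx
    have h2x := mul_pos (zero_lt_two' ℝ) hx
    have hpow := rpow_pos_of_pos h2x (2 * √(2 * x))
    rw [log_div (mul_pos hx hpow).ne' (rpow_pos_of_pos four_pos _).ne', log_mul hx.ne' hpow.ne',
      log_rpow h2x, log_rpow zero_lt_four]
    ring
  have hx : 0 < x := lt_of_lt_of_le (by norm_num1) x_large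
  rw [← div_le_one (rpow_pos_of_pos four_pos x), ← div_div_eq_mul_div, ← rpow_sub four_pos, ←
    mul_div 2 x, mul_div_left_comm, ← mul_one_sub, (by norm_num1 : (1 : ℝ) - 2 / 3 = 1 / 3),
    mul_one_div, ← log_nonpos_iff (hpos x hx).le, ← hf x hx]
  have hconc : ConcaveOn ℝ (Set.Ioi 0.5) f := by
    refine ((strictConcaveOn_log_Ioi.concaveOn.subset (Set.Ioi_subset_Ioi (by norm_num))
      (convex_Ioi 0.5)).add (ConcaveOn.smul zero_le_two ?_)).sub
      ((convexOn_id (convex_Ioi 0.5)).smul (div_nonneg (log_nonneg (by norm_num1)) (by norm_num1)))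
    refine (strictConcaveOn_sqrt_mul_log_Ioi.concaveOn.comp_linearMap
      ((2 : ℝ) • LinearMap.id)).subset (fun y hy => ?_) (convex_Ioi 0.5)
    simp only [Set.mem_Ioi, Set.mem_preimage, LinearMap.smul_apply, LinearMap.id_coe, id_eq,
      smul_eq_mul] at hy ⊢
    norm_num at hy
    linarith
  -- A concave function that is nonnegative at 18 and nonpositive at 8192 stays nonpositive after.
  have h18 : 0 ≤ f 18 := by
    have hsqrt : √(2 * 18 : ℝ) = 6 :=
      (sqrt_eq_iff_mul_self_eq_of_pos (by norm_num1)).mpr (by norm_num1)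
    rw [hf _ (by norm_num1), log_nonneg_iff (hpos _ (by norm_num1)), hsqrt,
      one_le_div (by positivity), show (18:ℝ) / 3 = ((6:ℕ):ℝ) by norm_num,
      show (2:ℝ) * 6 = ((12:ℕ):ℝ) by norm_num, rpow_natCast, rpow_natCast]
    norm_num1
  have h8192 : f 8192 ≤ 0 := by
    have hsqrt : √(2 * 8192 : ℝ) = 128 :=
      (sqrt_eq_iff_mul_self_eq_of_pos (by norm_num1)).mpr (by norm_num1)
    have hnum : (8192:ℝ) * (2 * 8192) ^ ((2:ℝ) * 128) = 2 ^ ((13 + 14 * 256 : ℕ) : ℝ) := by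
      rw [show (2:ℝ) * 128 = ((256:ℕ):ℝ) by norm_num, rpow_natCast, rpow_natCast, pow_add,
        pow_mul]
      norm_num1
    have h4 : (4:ℝ) = 2 ^ (2:ℝ) := by rw [rpow_two]; norm_num1
    rw [hf _ (by norm_num1), log_nonpos_iff (hpos _ (by norm_num1)).le, hsqrt,
      div_le_one (by positivity), hnum, h4, ← rpow_mul zero_le_two]
    exact rpow_le_rpow_of_exponent_le one_le_two (by norm_num1)
  have hx_mem : x ∈ Set.Ioi (0.5 : ℝ) := lt_of_lt_of_le (by norm_num1) x_large
  exact (hconc.right_le_of_le_left'' (by norm_num : (18 : ℝ) ∈ Set.Ioi 0.5) hx_mem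
    (by norm_num1) x_large (h8192.trans h18)).trans h8192

open Nat Finset

theorem main_inequality {n : ℕ} (n_large : 8192 ≤ n) :
    n * (2 * n) ^ (2 * sqrt (2 * n)) * 4 ^ (2 * n / 3) ≤ 4 ^ n := by
  rw [← @cast_le ℝ]
  simp only [cast_mul, cast_pow, ← Real.rpow_natCast, cast_ofNat]
  refine _root_.trans ?_ (real_main_inequality (by exact_mod_cast n_large))
  gcongr
  · exact mod_cast (by positivity : 0 < 2 * n)
  · exact_mod_cast Real.nat_sqrt_le_real_sqrt
  · norm_num1
  · exact cast_div_le.trans (by norm_cast)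

theorem prod_pow_factorization_centralBinom_range_le {n : ℕ} (n_pos : 0 < n) :
    ∏ p ∈ range (2 * n / 3 + 1), p ^ (centralBinom n).factorization p ≤
      (2 * n) ^ sqrt (2 * n) * 4 ^ (2 * n / 3) := by
  set f : ℕ → ℕ := fun p => p ^ (centralBinom n).factorization p
  set S := {p ∈ range (2 * n / 3 + 1) | p.Prime}
  have hS : ∏ p ∈ S, f p = ∏ p ∈ range (2 * n / 3 + 1), f p :=
    prod_filter_of_ne fun p _ hp => by
      contrapose hp
      simp [f, factorization_eq_zero_of_not_prime _ hp]
  rw [← hS, ← prod_filter_mul_prod_filter_not S (· ≤ sqrt (2 * n))]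
  -- Primes up to `√(2n)` contribute at most `2n` each; larger ones divide `centralBinom n` once.
  gcongr
  · have hcard : #{p ∈ S | p ≤ sqrt (2 * n)} ≤ sqrt (2 * n) := by
      refine (card_le_card fun p hp => ?_).trans (card_Icc 1 _).le
      simp only [S, mem_filter] at hp
      exact mem_Icc.mpr ⟨hp.1.2.one_lt.le, hp.2⟩
    refine (prod_le_pow_card _ _ _ fun p _ => pow_factorization_choose_le (by omega)).trans ?_
    exact pow_le_pow_right₀ (by omega) hcard
  · refine le_trans ?_ (primorial_le_four_pow (2 * n / 3))
    refine (prod_le_prod' fun p hp => (?_ : f p ≤ p)).trans ?_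
    · simp only [S, mem_filter, not_le] at hp
      exact (pow_le_pow_right₀ hp.1.2.one_lt.le
        (factorization_choose_le_one (sqrt_lt'.mp hp.2))).trans (pow_one p).le
    · exact prod_le_prod_of_subset_of_one_le' (filter_subset _ _)
        fun p hp _ => (mem_filter.1 hp).2.one_lt.le

theorem prod_pow_factorization_centralBinom_Ico_le {n : ℕ} (n_large : 2 < n) :
    ∏ p ∈ Ico (2 * n / 3 + 1) (2 * n + 1), p ^ (centralBinom n).factorization p ≤
      (2 * n) ^ #{p ∈ Ioc n (2 * n) | p.Prime} := by
  -- Primes in `(2n/3, n]` do not divide `centralBinom n`.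
  rw [← prod_subset (s₁ := {p ∈ Ioc n (2 * n) | p.Prime}) (fun p hp => ?_) fun p hp hp' => ?_]
  · exact prod_le_pow_card _ _ _ fun p _ => pow_factorization_choose_le (by omega)
  · simp only [mem_filter, mem_Ioc, mem_Ico] at hp ⊢
    omega
  · simp only [mem_filter, mem_Ioc, mem_Ico, not_and] at hp hp'
    by_cases hprime : p.Prime
    · have hpn : p ≤ n := by by_contra; exact hp' ⟨by omega, by omega⟩ hprime
      rw [factorization_centralBinom_of_two_mul_self_lt_three_mul n_large hpn (by omega), pow_zero]
    · rw [factorization_eq_zero_of_not_prime _ hprime, pow_zero]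

theorem centralBinom_le {n : ℕ} (n_large : 2 < n) :
    centralBinom n ≤
      (2 * n) ^ sqrt (2 * n) * 4 ^ (2 * n / 3) * (2 * n) ^ #{p ∈ Ioc n (2 * n) | p.Prime} := by
  rw [← prod_pow_factorization_centralBinom,
    ← prod_range_mul_prod_Ico _ (by omega : 2 * n / 3 + 1 ≤ 2 * n + 1)]
  exact mul_le_mul' (prod_pow_factorization_centralBinom_range_le (by omega))
    (prod_pow_factorization_centralBinom_Ico_le n_large)

theorem sqrt_lt_card_primes_Ioc {n : ℕ} (n_large : 8192 ≤ n) :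
    sqrt (2 * n) < #{p ∈ Ioc n (2 * n) | p.Prime} := by
  by_contra! hfew
  have hlower : 4 ^ n < n * centralBinom n := four_pow_lt_mul_centralBinom n (by omega)
  have hupper : n * centralBinom n ≤ n * (2 * n) ^ (2 * sqrt (2 * n)) * 4 ^ (2 * n / 3) :=
    calc n * centralBinom n
        ≤ n * ((2 * n) ^ sqrt (2 * n) * 4 ^ (2 * n / 3) * (2 * n) ^ sqrt (2 * n)) := by
          grw [centralBinom_le (by omega), hfew]
          omega
      _ = n * (2 * n) ^ (2 * sqrt (2 * n)) * 4 ^ (2 * n / 3) := by ring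
  exact (hlower.trans_le (hupper.trans (main_inequality n_large))).false

end Ramanujan

open Nat Finset Filter
open scoped Nat.Prime

namespace Nat

theorem primeCounting_add_card_primes_Ioc {a b : ℕ} (hab : a ≤ b) :
    π a + #{p ∈ Ioc a b | p.Prime} = π b := by
  rw [← primesLE_card_eq_primeCounting, ← primesLE_card_eq_primeCounting,
    primesLE_eq_filter_Ioc_zero, primesLE_eq_filter_Ioc_zero,
    ← Ioc_union_Ioc_eq_Ioc (zero_le a) hab, filter_union, card_union_of_disjoint
      (disjoint_filter_filter (Ioc_disjoint_Ioc_of_le le_rfl))]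

theorem tendsto_primeCounting_sub_primeCounting_div_two :
    Tendsto (fun x => π x - π (x / 2)) atTop atTop := by
  refine tendsto_atTop.2 fun m => eventually_atTop.2 ⟨16384 + m * m, fun x hx => ?_⟩
  have hm : m ≤ sqrt (2 * (x / 2)) := le_sqrt.2 (by omega)
  have hcount := primeCounting_add_card_primes_Ioc (by omega : x / 2 ≤ 2 * (x / 2))
  have hmono : π (2 * (x / 2)) ≤ π x := monotone_primeCounting (by omega)
  have hprimes := Ramanujan.sqrt_lt_card_primes_Ioc (n := x / 2) (by omega)
  omega

theorem primeCounting_succ_le (x : ℕ) : π (x + 1) ≤ π x + 1 := by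
  simp only [primeCounting, primeCounting']
  rw [count_succ]
  split <;> omega

theorem primeCounting_sub_primeCounting_div_two_succ_le (x : ℕ) :
    π (x + 1) - π ((x + 1) / 2) ≤ π x - π (x / 2) + 1 := by
  have hsucc := primeCounting_succ_le x
  have hhalf : π (x / 2) ≤ π ((x + 1) / 2) := monotone_primeCounting (by omega)
  have hle : π (x / 2) ≤ π x := monotone_primeCounting (by omega)
  omega

end Nat

theorem ramanujan_spec (n : ℕ) :
    0 < ramanujan n ∧ ∀ x, ramanujan n ≤ x → n ≤ π x - π (x / 2) := by
  obtain ⟨N, hN⟩ :=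
    eventually_atTop.1 (tendsto_atTop.1 tendsto_primeCounting_sub_primeCounting_div_two n)
  exact Nat.sInf_mem (s := {R | 0 < R ∧ ∀ x, R ≤ x → n ≤ π x - π (x / 2)})
    ⟨N + 1, by omega, fun x hx => hN x (by omega)⟩

theorem primeCounting_sub_primeCounting_div_two_lt_of_succ_eq_ramanujan {n x : ℕ} (hx : 0 < x)
    (hxR : x + 1 = ramanujan n) : π x - π (x / 2) < n := by
  have hnot := Nat.notMem_of_lt_sInf (show x < ramanujan n by omega)
  simp only [Set.mem_ofPred_eq, not_and, not_forall, not_le] at hnot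
  obtain ⟨y, hxy, hy⟩ := hnot hx
  obtain rfl | hxy := hxy.eq_or_lt
  · exact hy
  · exact absurd ((ramanujan_spec n).2 y (by omega)) (by omega)

theorem primeCounting_ramanujan_general (n : ℕ) :
    Nat.primeCounting (ramanujan n) - Nat.primeCounting (ramanujan n / 2) = n := by
  obtain ⟨hpos, hge⟩ := ramanujan_spec n
  refine le_antisymm ?_ (hge _ le_rfl)
  rcases (show ramanujan n = 1 ∨ 1 < ramanujan n by omega) with hR | hR
  · simp [hR]
  · have hpred : ramanujan n - 1 + 1 = ramanujan n := Nat.sub_add_cancel hpos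
    rw [← hpred]
    exact (primeCounting_sub_primeCounting_div_two_succ_le _).trans
      (primeCounting_sub_primeCounting_div_two_lt_of_succ_eq_ramanujan (by omega) hpred)

/-- For every n ≥ 1, π(R_n) − π(⌊R_n/2⌋) = n. -/
theorem primeCounting_ramanujan (n : ℕ) (hn : 1 ≤ n) :
    Nat.primeCounting (ramanujan n) - Nat.primeCounting (ramanujan n / 2) = n :=
  primeCounting_ramanujan_general n
end

section
/- The prime 131 satisfies Condition 3 (every integer k with 64 ≤ k ≤ 65 is composite, 127 being the prime preceding 131), but 131 is not a Labos prime; that is, 131 is a pseudo-Labos prime. -/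
/-- The n-th Labos prime: the smallest positive integer L with
π(L) − π(⌊L/2⌋) = n. -/
noncomputable def labos (n : ℕ) : ℕ :=
  sInf {L : ℕ | 0 < L ∧ Nat.primeCounting L - Nat.primeCounting (L / 2) = n}

/-- A Labos prime is a number of the form L_n for some n ≥ 1. -/
def IsLabosPrime (p : ℕ) : Prop := ∃ n : ℕ, 1 ≤ n ∧ p = labos n

/-!
131 = p₃₂ and its predecessor is 127 = p₃₁, so Condition 3 only asks that 64 and 65 be composite.
It is not a Labos prime because π(113) − π(56) = 30 − 16 = 14 = 32 − 18 = π(131) − π(65):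
the least L with π(L) − π(⌊L/2⌋) = 14 is then at most 113 < 131, while a Labos prime L_n
always satisfies π(L_n) − π(⌊L_n/2⌋) = n.
-/

open Nat (primeCounting)

theorem nthPrime_count_add_one {p : ℕ} (hp : p.Prime) :
    nthPrime (Nat.count Nat.Prime p + 1) = p := by
  simp [nthPrime, Nat.nth_count hp]

theorem nthPrime_inj {m n : ℕ} (hm : 1 ≤ m) (hn : 1 ≤ n) (h : nthPrime m = nthPrime n) :
    m = n := by
  have := Nat.nth_injective Nat.infinite_setOfPred_prime h
  omega

theorem labos_le {L : ℕ} (hL : 0 < L) : labos (primeCounting L - primeCounting (L / 2)) ≤ L :=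
  Nat.sInf_le ⟨hL, rfl⟩

theorem primeCounting_labos_sub_primeCounting_half {n : ℕ} (h : labos n ≠ 0) :
    primeCounting (labos n) - primeCounting (labos n / 2) = n :=
  (Nat.sInf_mem (Nat.nonempty_of_pos_sInf (Nat.pos_of_ne_zero h))).2

theorem not_isLabosPrime_of_lt {L M : ℕ} (hM : 0 < M) (hML : M < L)
    (h : primeCounting M - primeCounting (M / 2) = primeCounting L - primeCounting (L / 2)) :
    ¬ IsLabosPrime L := by
  rintro ⟨n, -, rfl⟩
  have hle := labos_le hM
  rw [h, primeCounting_labos_sub_primeCounting_half (by omega)] at hle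
  omega

/-- The prime 131 satisfies Condition 3: with n its index among the primes
(n ≥ 3), every integer k with (p_{n-1}+1)/2 ≤ k ≤ (131−1)/2 is composite
(concretely, every k with 64 ≤ k ≤ 65 is composite, 127 being the prime
preceding 131); yet 131 is not a Labos prime.  Hence 131 is a pseudo-Labos
prime. -/
theorem pseudoLabos_131 :
    Nat.Prime 131 ∧ Odd 131 ∧
    (∀ n : ℕ, 3 ≤ n → (131 : ℕ) = nthPrime n →
      ∀ k : ℕ, (nthPrime (n - 1) + 1) / 2 ≤ k → k ≤ (131 - 1) / 2 → ¬ k.Prime) ∧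
    (∀ k : ℕ, 64 ≤ k → k ≤ 65 → ¬ k.Prime) ∧
    ¬ IsLabosPrime 131 := by
  have count_131 : Nat.count Nat.Prime 131 = 31 := by
    set_option maxRecDepth 100000 in decide
  have count_127 : Nat.count Nat.Prime 127 = 30 := by
    set_option maxRecDepth 100000 in decide
  have composite : ∀ k : ℕ, 64 ≤ k → k ≤ 65 → ¬ k.Prime := by
    intro k hk₁ hk₂
    interval_cases k <;> norm_num
  refine ⟨by norm_num, by decide, ?_, composite, ?_⟩
  · intro n hn h131 k hk₁ hk₂
    have p32 : nthPrime 32 = 131 := by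
      simpa [count_131] using nthPrime_count_add_one (p := 131) (by norm_num)
    have p31 : nthPrime 31 = 127 := by
      simpa [count_127] using nthPrime_count_add_one (p := 127) (by norm_num)
    obtain rfl : n = 32 := nthPrime_inj (by omega) (by norm_num) (h131.symm.trans p32.symm)
    simp only [Nat.reduceSub, p31] at hk₁
    exact composite k hk₁ hk₂
  · refine not_isLabosPrime_of_lt (M := 113) (by norm_num) (by norm_num) ?_
    set_option maxRecDepth 100000 in decide
end
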